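/- Let W^m : ℝ³ → ℝ be twice continuously differentiable (a muscle stored energy function), let u : [0, L₀] → ℝ be continuously differentiable (a fixed muscle activation), let r, θ be twice continuously differentiable on [0, L₀], and let h_r : [0, L₀] → ℝ², h_θ : [0, L₀] → ℝ be continuously differentiable with h_r(0) = h_r(L₀) = 0 and h_θ(0) = h_θ(L₀) = 0. Define the muscle stresses n₁^m(s) = ∂W^m/∂ν₁(w(s)), n₂^m(s) = ∂W^m/∂ν₂(w(s)), m^m(s) = ∂W^m/∂κ(w(s)), where w(s) are the strains of (r, θ). Then the muscle potential energy 𝒱^m(ε) = ∫₀^{L₀} u(s) W^m(ν₁^ε(s), ν₂^ε(s), κ^ε(s)) ds of the perturbed configuration (r + ε h_r, θ + ε h_θ) is differentiable at ε = 0 with 𝒱^m′(0) = −∫₀^{L₀} [ ⟨ d/ds ( u(s)(n₁^m(s)𝖺(s) + n₂^m(s)𝖻(s)) ), h_r(s) ⟩ + ( (u·m^m)′(s) + ν₁(s) u(s) n₂^m(s) − ν₂(s) u(s) n₁^m(s) ) h_θ(s) ] ds. That is, the muscle force operator 𝖦^m(q)u^m equals the negative variational gradient −δ𝒱^m/δq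 of the muscle potential energy. -/

import Mathlib

/-!
Differentiating under the integral sign (the integrand and its `ε`-derivative are jointly
continuous, hence bounded on compacts), the first variation is `∫ u ⟪∇Wᵐ(w), δw⟫`, where the
linearised strains are `δν₁ = ⟪h_r', 𝖺⟫ + h_θ ν₂`, `δν₂ = ⟪h_r', 𝖻⟫ - h_θ ν₁`, `δκ = h_θ'`
(because `𝖺' = θ' 𝖻` and `𝖻' = -θ' 𝖺`). Regrouped, the integrand is
`⟪u (n₁ 𝖺 + n₂ 𝖻), h_r'⟫ + u m h_θ' + (ν₂ u n₁ - ν₁ u n₂) h_θ`, and integrating the first two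
terms by parts, with boundary terms killed by `h_r` and `h_θ` vanishing at the ends, gives the
formula.
-/

noncomputable def dot (u v : ℝ × ℝ) : ℝ := u.1 * v.1 + u.2 * v.2

open Real

noncomputable section

def frameA (φ : ℝ) : ℝ × ℝ := (cos φ, sin φ)

def frameB (φ : ℝ) : ℝ × ℝ := (-sin φ, cos φ)

/-- `strains (r' s) (θ s) (θ' s)` is the triple `(ν₁, ν₂, κ)(s)` of the paper. -/
def strains (p : ℝ × ℝ) (φ k : ℝ) : ℝ × ℝ × ℝ := (dot p (frameA φ), dot p (frameB φ), k)

def strainVariation (p q : ℝ × ℝ) (φ η m : ℝ) : ℝ × ℝ × ℝ :=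
  (dot q (frameA φ) + η * dot p (frameB φ), dot q (frameB φ) - η * dot p (frameA φ), m)

end

section Regularity

variable {α : Type*} [TopologicalSpace α]

@[fun_prop]
theorem Continuous.dot {f g : α → ℝ × ℝ} (hf : Continuous f) (hg : Continuous g) :
    Continuous fun x => dot (f x) (g x) := by
  unfold _root_.dot; fun_prop

@[fun_prop]
theorem contDiff_frameA {n : WithTop ℕ∞} : ContDiff ℝ n frameA := by
  unfold frameA; fun_prop

@[fun_prop]
theorem contDiff_frameB {n : WithTop ℕ∞} : ContDiff ℝ n frameB := by
  unfold frameB; fun_prop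

@[fun_prop]
theorem ContDiff.strains {n : WithTop ℕ∞} {p : ℝ → ℝ × ℝ} {φ k : ℝ → ℝ}
    (hp : ContDiff ℝ n p) (hφ : ContDiff ℝ n φ) (hk : ContDiff ℝ n k) :
    ContDiff ℝ n fun t => strains (p t) (φ t) (k t) := by
  unfold _root_.strains _root_.dot; fun_prop

@[fun_prop]
theorem Continuous.strains {p : α → ℝ × ℝ} {φ k : α → ℝ}
    (hp : Continuous p) (hφ : Continuous φ) (hk : Continuous k) :
    Continuous fun t => strains (p t) (φ t) (k t) := by
  unfold _root_.strains; fun_prop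

@[fun_prop]
theorem Continuous.strainVariation {p q : α → ℝ × ℝ} {φ η m : α → ℝ}
    (hp : Continuous p) (hq : Continuous q) (hφ : Continuous φ) (hη : Continuous η)
    (hm : Continuous m) :
    Continuous fun t => strainVariation (p t) (q t) (φ t) (η t) (m t) := by
  unfold _root_.strainVariation; fun_prop

end Regularity

theorem HasDerivAt.dot {f g : ℝ → ℝ × ℝ} {f' g' : ℝ × ℝ} {x : ℝ} (hf : HasDerivAt f f' x)
    (hg : HasDerivAt g g' x) :
    HasDerivAt (fun t => dot (f t) (g t)) (dot f' (g x) + dot (f x) g') x := by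
  have hf₁ := hasFDerivAt_fst.comp_hasDerivAt x hf
  have hf₂ := hasFDerivAt_snd.comp_hasDerivAt x hf
  have hg₁ := hasFDerivAt_fst.comp_hasDerivAt x hg
  have hg₂ := hasFDerivAt_snd.comp_hasDerivAt x hg
  refine ((hf₁.mul hg₁).add (hf₂.mul hg₂)).congr_deriv ?_
  simp only [_root_.dot, ContinuousLinearMap.coe_fst', ContinuousLinearMap.coe_snd',
    Function.comp_apply]
  ring

theorem hasDerivAt_frameA (φ : ℝ) : HasDerivAt frameA (frameB φ) φ :=
  (hasDerivAt_cos φ).prodMk (hasDerivAt_sin φ)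

theorem hasDerivAt_frameB (φ : ℝ) : HasDerivAt frameB (-frameA φ) φ :=
  (hasDerivAt_sin φ).neg.prodMk (hasDerivAt_cos φ)

theorem hasDerivAt_strains_line (p q : ℝ × ℝ) (φ η k m x : ℝ) :
    HasDerivAt (fun ε => strains (p + ε • q) (φ + ε * η) (k + ε * m))
      (strainVariation (p + x • q) q (φ + x * η) η m) x := by
  have hp : HasDerivAt (fun ε : ℝ => p + ε • q) q x :=
    (((hasDerivAt_id x).smul_const q).const_add p).congr_deriv (one_smul ℝ q)
  have hφ : HasDerivAt (fun ε => φ + ε * η) η x := (hasDerivAt_mul_const η).const_add φ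
  have hk : HasDerivAt (fun ε => k + ε * m) m x := (hasDerivAt_mul_const m).const_add k
  refine ((hp.dot ((hasDerivAt_frameA _).scomp x hφ)).prodMk
    ((hp.dot ((hasDerivAt_frameB _).scomp x hφ)).prodMk hk)).congr_deriv ?_
  simp only [strainVariation, dot, Prod.smul_fst, Prod.smul_snd, Prod.fst_neg, Prod.snd_neg,
    Function.comp_apply, smul_eq_mul, Prod.mk.injEq, and_true]
  constructor <;> ring

theorem fderiv_apply_eq_sum_partials {f : ℝ × ℝ × ℝ → ℝ} {w : ℝ × ℝ × ℝ}
    (hf : DifferentiableAt ℝ f w) (v : ℝ × ℝ × ℝ) :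
    fderiv ℝ f w v = deriv (fun x => f (x, w.2.1, w.2.2)) w.1 * v.1
      + deriv (fun y => f (w.1, y, w.2.2)) w.2.1 * v.2.1
      + deriv (fun z => f (w.1, w.2.1, z)) w.2.2 * v.2.2 := by
  have h₁ : deriv (fun x => f (x, w.2.1, w.2.2)) w.1 = fderiv ℝ f w (1, 0, 0) :=
    (hf.hasFDerivAt.comp_hasDerivAt w.1
      ((hasDerivAt_id _).prodMk ((hasDerivAt_const _ _).prodMk (hasDerivAt_const _ _)))).deriv
  have h₂ : deriv (fun y => f (w.1, y, w.2.2)) w.2.1 = fderiv ℝ f w (0, 1, 0) :=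
    (hf.hasFDerivAt.comp_hasDerivAt w.2.1
      ((hasDerivAt_const _ _).prodMk ((hasDerivAt_id _).prodMk (hasDerivAt_const _ _)))).deriv
  have h₃ : deriv (fun z => f (w.1, w.2.1, z)) w.2.2 = fderiv ℝ f w (0, 0, 1) :=
    (hf.hasFDerivAt.comp_hasDerivAt w.2.2
      ((hasDerivAt_const _ _).prodMk ((hasDerivAt_const _ _).prodMk (hasDerivAt_id _)))).deriv
  have hv : v = v.1 • ((1 : ℝ), (0 : ℝ), (0 : ℝ)) + v.2.1 • ((0 : ℝ), (1 : ℝ), (0 : ℝ))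
      + v.2.2 • ((0 : ℝ), (0 : ℝ), (1 : ℝ)) := by
    ext <;> simp
  rw [h₁, h₂, h₃]
  conv_lhs => rw [hv]
  simp only [map_add, map_smul, smul_eq_mul, mul_comm]

theorem hasDerivAt_intervalIntegral_of_continuous {E : Type*} [NormedAddCommGroup E]
    [NormedSpace ℝ E] {F F' : ℝ → ℝ → E} {a b : ℝ} (x₀ : ℝ)
    (hF : Continuous fun p : ℝ × ℝ => F p.1 p.2) (hF' : Continuous fun p : ℝ × ℝ => F' p.1 p.2)
    (hderiv : ∀ x t, HasDerivAt (fun x => F x t) (F' x t) x) :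
    HasDerivAt (fun x => ∫ t in a..b, F x t) (∫ t in a..b, F' x₀ t) x₀ := by
  obtain ⟨C, hC⟩ := ((isCompact_closedBall x₀ 1).prod (isCompact_uIcc (a := a) (b := b)))
    |>.exists_bound_of_continuousOn hF'.continuousOn
  refine (intervalIntegral.hasDerivAt_integral_of_dominated_loc_of_deriv_le (bound := fun _ => C)
    (Metric.closedBall_mem_nhds x₀ one_pos) ?_ ((hF.uncurry_left x₀).intervalIntegrable a b)
    (hF'.uncurry_left x₀).aestronglyMeasurable ?_ intervalIntegrable_const ?_).2
  · exact .of_forall fun x => (hF.uncurry_left x).aestronglyMeasurable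
  · exact .of_forall fun t ht x hx => hC (x, t) ⟨hx, Set.uIoc_subset_uIcc ht⟩
  · exact .of_forall fun t _ x _ => hderiv x t

theorem integral_dot_deriv_add_mul_deriv_eq_neg {G h : ℝ → ℝ × ℝ} {M c η : ℝ → ℝ} {a b : ℝ}
    (hG : ContDiff ℝ 1 G) (hh : ContDiff ℝ 1 h) (hM : ContDiff ℝ 1 M) (hη : ContDiff ℝ 1 η)
    (hc : Continuous c) (ha : h a = 0) (hb : h b = 0) (hηa : η a = 0) (hηb : η b = 0) :
    ∫ s in a..b, (dot (G s) (deriv h s) + M s * deriv η s + c s * η s) =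
      -∫ s in a..b, (dot (deriv G s) (h s) + (deriv M s - c s) * η s) := by
  have := hG.continuous_deriv le_rfl
  have := hh.continuous_deriv le_rfl
  have := hM.continuous_deriv le_rfl
  have := hη.continuous_deriv le_rfl
  have hΦ : ∀ s, HasDerivAt (fun t => dot (G t) (h t) + M t * η t)
      (dot (deriv G s) (h s) + dot (G s) (deriv h s) + (deriv M s * η s + M s * deriv η s)) s :=
    fun s => ((hG.differentiable one_ne_zero s).hasDerivAt.dot
      (hh.differentiable one_ne_zero s).hasDerivAt).add
        ((hM.differentiable one_ne_zero s).hasDerivAt.mul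
          (hη.differentiable one_ne_zero s).hasDerivAt)
  have hΦ_integral : ∫ s in a..b,
      (dot (deriv G s) (h s) + dot (G s) (deriv h s) + (deriv M s * η s + M s * deriv η s)) = 0 := by
    rw [intervalIntegral.integral_eq_sub_of_hasDerivAt (fun s _ => hΦ s)
      (Continuous.intervalIntegrable (by fun_prop) a b)]
    simp [ha, hb, hηa, hηb, dot]
  rw [eq_neg_iff_add_eq_zero, ← intervalIntegral.integral_add
    (Continuous.intervalIntegrable (by fun_prop) a b)
    (Continuous.intervalIntegrable (by fun_prop) a b), ← hΦ_integral]
  congr 1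
  ext s
  simp only [dot]
  ring

theorem mul_stress_apply_strainVariation (u n₁ n₂ m : ℝ) (p q : ℝ × ℝ) (φ η η' : ℝ) :
    u * (n₁ * (strainVariation p q φ η η').1 + n₂ * (strainVariation p q φ η η').2.1
        + m * (strainVariation p q φ η η').2.2)
      = dot (u • (n₁ • frameA φ + n₂ • frameB φ)) q + u * m * η'
        + (dot p (frameB φ) * (u * n₁) - dot p (frameA φ) * (u * n₂)) * η := by
  simp only [strainVariation, dot, Prod.smul_fst, Prod.smul_snd, Prod.fst_add, Prod.snd_add,
    smul_eq_mul]
  ring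

theorem hasDerivAt_integral_mul_strains_line {W : ℝ × ℝ × ℝ → ℝ} (hW : ContDiff ℝ 1 W)
    {u Θ H K M : ℝ → ℝ} {P Q : ℝ → ℝ × ℝ} {a b : ℝ} (hu : Continuous u) (hP : Continuous P)
    (hQ : Continuous Q) (hΘ : Continuous Θ) (hH : Continuous H) (hK : Continuous K)
    (hM : Continuous M) :
    HasDerivAt
      (fun ε => ∫ s in a..b, u s * W (strains (P s + ε • Q s) (Θ s + ε * H s) (K s + ε * M s)))
      (∫ s in a..b,
        u s * fderiv ℝ W (strains (P s) (Θ s) (K s))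
          (strainVariation (P s) (Q s) (Θ s) (H s) (M s)))
      0 := by
  have hDW : Continuous (fderiv ℝ W) := hW.continuous_fderiv one_ne_zero
  have hW' : Continuous W := hW.continuous
  have hderiv : ∀ ε s, HasDerivAt
      (fun ε => u s * W (strains (P s + ε • Q s) (Θ s + ε * H s) (K s + ε * M s)))
      (u s * fderiv ℝ W (strains (P s + ε • Q s) (Θ s + ε * H s) (K s + ε * M s))
        (strainVariation (P s + ε • Q s) (Q s) (Θ s + ε * H s) (H s) (M s))) ε := fun ε s =>
    ((hW.differentiable one_ne_zero _).hasFDerivAt.comp_hasDerivAt ε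
      (hasDerivAt_strains_line _ _ _ _ _ _ ε)).const_mul (u s)
  simpa using hasDerivAt_intervalIntegral_of_continuous 0 (by fun_prop) (by fun_prop) hderiv

theorem muscle_energy_first_variation_general
    (L₀ : ℝ)
    (Wm : ℝ × ℝ × ℝ → ℝ) (hWm : ContDiff ℝ 2 Wm)
    (u : ℝ → ℝ) (hu : ContDiff ℝ 1 u)
    (r : ℝ → ℝ × ℝ) (θ : ℝ → ℝ) (hr : ContDiff ℝ 2 r) (hθ : ContDiff ℝ 2 θ)
    (h_r : ℝ → ℝ × ℝ) (h_θ : ℝ → ℝ) (hhr : ContDiff ℝ 1 h_r) (hhθ : ContDiff ℝ 1 h_θ)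
    (hr0 : h_r 0 = 0) (hrL : h_r L₀ = 0) (hθ0 : h_θ 0 = 0) (hθL : h_θ L₀ = 0)
    (a b : ℝ → ℝ × ℝ)
    (ha : ∀ s, a s = (Real.cos (θ s), Real.sin (θ s)))
    (hb : ∀ s, b s = (-Real.sin (θ s), Real.cos (θ s)))
    (ν₁ ν₂ κ : ℝ → ℝ)
    (hν₁ : ∀ s, ν₁ s = dot (deriv r s) (a s))
    (hν₂ : ∀ s, ν₂ s = dot (deriv r s) (b s))
    (hκ : ∀ s, κ s = deriv θ s)
    (n₁m n₂m mm : ℝ → ℝ)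
    (hn₁m : ∀ s, n₁m s = deriv (fun x => Wm (x, ν₂ s, κ s)) (ν₁ s))
    (hn₂m : ∀ s, n₂m s = deriv (fun y => Wm (ν₁ s, y, κ s)) (ν₂ s))
    (hmm : ∀ s, mm s = deriv (fun z => Wm (ν₁ s, ν₂ s, z)) (κ s))
    (aε bε : ℝ → ℝ → ℝ × ℝ)
    (haε : ∀ ε s, aε ε s = (Real.cos (θ s + ε * h_θ s), Real.sin (θ s + ε * h_θ s)))
    (hbε : ∀ ε s, bε ε s = (-Real.sin (θ s + ε * h_θ s), Real.cos (θ s + ε * h_θ s)))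
    (ν₁ε ν₂ε κε : ℝ → ℝ → ℝ)
    (hν₁ε : ∀ ε s, ν₁ε ε s = dot (deriv r s + ε • deriv h_r s) (aε ε s))
    (hν₂ε : ∀ ε s, ν₂ε ε s = dot (deriv r s + ε • deriv h_r s) (bε ε s))
    (hκε : ∀ ε s, κε ε s = deriv θ s + ε * deriv h_θ s)
    (𝒱m : ℝ → ℝ)
    (h𝒱m : ∀ ε, 𝒱m ε = ∫ s in (0:ℝ)..L₀, u s * Wm (ν₁ε ε s, ν₂ε ε s, κε ε s)) :
    HasDerivAt 𝒱m
      (-∫ s in (0:ℝ)..L₀,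
        (dot (deriv (fun t => u t • (n₁m t • a t + n₂m t • b t)) s) (h_r s)
          + (deriv (fun t => u t * mm t) s
              + ν₁ s * (u s * n₂m s) - ν₂ s * (u s * n₁m s)) * h_θ s)) 0 := by
  obtain rfl : a = fun s => frameA (θ s) := funext ha
  obtain rfl : b = fun s => frameB (θ s) := funext hb
  obtain rfl : ν₁ = fun s => dot (deriv r s) (frameA (θ s)) := funext hν₁
  obtain rfl : ν₂ = fun s => dot (deriv r s) (frameB (θ s)) := funext hν₂
  obtain rfl : κ = deriv θ := funext hκ
  have hV : 𝒱m = fun ε => ∫ s in (0:ℝ)..L₀, u s * Wm (strains (deriv r s + ε • deriv h_r s)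
      (θ s + ε * h_θ s) (deriv θ s + ε * deriv h_θ s)) := by
    ext ε
    rw [h𝒱m]
    congr! 3 with s
    rw [hν₁ε, hν₂ε, hκε, haε, hbε]; rfl
  have hr' : ContDiff ℝ 1 (deriv r) := hr.deriv'
  have hθ' : ContDiff ℝ 1 (deriv θ) := hθ.deriv'
  have hθ₁ : ContDiff ℝ 1 θ := hθ.of_le one_le_two
  have hDW : ContDiff ℝ 1 (fderiv ℝ Wm) := hWm.fderiv_right le_rfl
  have hstress : ∀ s v, fderiv ℝ Wm (strains (deriv r s) (θ s) (deriv θ s)) v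
      = n₁m s * v.1 + n₂m s * v.2.1 + mm s * v.2.2 := fun s v => by
    simp only [fderiv_apply_eq_sum_partials ((hWm.differentiable two_ne_zero) _), hn₁m, hn₂m, hmm]
    rfl
  have hfderivC : ∀ v,
      ContDiff ℝ 1 fun s => fderiv ℝ Wm (strains (deriv r s) (θ s) (deriv θ s)) v :=
    fun v => by fun_prop
  have hn₁C : ContDiff ℝ 1 n₁m := by simpa [hstress] using hfderivC (1, 0, 0)
  have hn₂C : ContDiff ℝ 1 n₂m := by simpa [hstress] using hfderivC (0, 1, 0)
  have hmC : ContDiff ℝ 1 mm := by simpa [hstress] using hfderivC (0, 0, 1)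
  rw [hV]
  convert hasDerivAt_integral_mul_strains_line (a := 0) (b := L₀) (hWm.of_le one_le_two)
    hu.continuous hr'.continuous (hhr.continuous_deriv le_rfl) hθ.continuous hhθ.continuous
    hθ'.continuous (hhθ.continuous_deriv le_rfl) using 1
  rw [eq_comm, intervalIntegral.integral_congr fun s _ => by
      rw [hstress, mul_stress_apply_strainVariation],
    integral_dot_deriv_add_mul_deriv_eq_neg (by fun_prop) hhr (by fun_prop) hhθ (by fun_prop)
      hr0 hrL hθ0 hθL]
  congr 2
  ext s
  ring

/-- The muscle force operator 𝖦^m(q)u^m equals the negative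
variational gradient −δ𝒱^m/δq of the muscle potential energy
𝒱^m = ∫₀^{L₀} u(s) W^m(ν₁, ν₂, κ) ds: for variations (h_r, h_θ) vanishing
at both endpoints, the first variation of 𝒱^m at ε = 0 is minus the integral
of the distributed force ∂ₛ(u(n₁^m𝖺 + n₂^m𝖻)) paired with h_r plus the
couple ∂ₛ(u m^m) + ν₁ u n₂^m − ν₂ u n₁^m paired with h_θ. -/
theorem muscle_energy_first_variation
    (L₀ : ℝ) (hL : 0 < L₀)
    (Wm : ℝ × ℝ × ℝ → ℝ) (hWm : ContDiff ℝ 2 Wm)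
    (u : ℝ → ℝ) (hu : ContDiff ℝ 1 u)
    (r : ℝ → ℝ × ℝ) (θ : ℝ → ℝ) (hr : ContDiff ℝ 2 r) (hθ : ContDiff ℝ 2 θ)
    (h_r : ℝ → ℝ × ℝ) (h_θ : ℝ → ℝ) (hhr : ContDiff ℝ 1 h_r) (hhθ : ContDiff ℝ 1 h_θ)
    (hr0 : h_r 0 = 0) (hrL : h_r L₀ = 0) (hθ0 : h_θ 0 = 0) (hθL : h_θ L₀ = 0)
    (a b : ℝ → ℝ × ℝ)
    (ha : ∀ s, a s = (Real.cos (θ s), Real.sin (θ s)))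
    (hb : ∀ s, b s = (-Real.sin (θ s), Real.cos (θ s)))
    (ν₁ ν₂ κ : ℝ → ℝ)
    (hν₁ : ∀ s, ν₁ s = dot (deriv r s) (a s))
    (hν₂ : ∀ s, ν₂ s = dot (deriv r s) (b s))
    (hκ : ∀ s, κ s = deriv θ s)
    (n₁m n₂m mm : ℝ → ℝ)
    (hn₁m : ∀ s, n₁m s = deriv (fun x => Wm (x, ν₂ s, κ s)) (ν₁ s))
    (hn₂m : ∀ s, n₂m s = deriv (fun y => Wm (ν₁ s, y, κ s)) (ν₂ s))
    (hmm : ∀ s, mm s = deriv (fun z => Wm (ν₁ s, ν₂ s, z)) (κ s))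
    (aε bε : ℝ → ℝ → ℝ × ℝ)
    (haε : ∀ ε s, aε ε s = (Real.cos (θ s + ε * h_θ s), Real.sin (θ s + ε * h_θ s)))
    (hbε : ∀ ε s, bε ε s = (-Real.sin (θ s + ε * h_θ s), Real.cos (θ s + ε * h_θ s)))
    (ν₁ε ν₂ε κε : ℝ → ℝ → ℝ)
    (hν₁ε : ∀ ε s, ν₁ε ε s = dot (deriv r s + ε • deriv h_r s) (aε ε s))
    (hν₂ε : ∀ ε s, ν₂ε ε s = dot (deriv r s + ε • deriv h_r s) (bε ε s))
    (hκε : ∀ ε s, κε ε s = deriv θ s + ε * deriv h_θ s)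
    (𝒱m : ℝ → ℝ)
    (h𝒱m : ∀ ε, 𝒱m ε = ∫ s in (0:ℝ)..L₀, u s * Wm (ν₁ε ε s, ν₂ε ε s, κε ε s)) :
    HasDerivAt 𝒱m
      (-∫ s in (0:ℝ)..L₀,
        (dot (deriv (fun t => u t • (n₁m t • a t + n₂m t • b t)) s) (h_r s)
          + (deriv (fun t => u t * mm t) s
              + ν₁ s * (u s * n₂m s) - ν₂ s * (u s * n₁m s)) * h_θ s)) 0 :=
  muscle_energy_first_variation_general L₀ Wm hWm u hu r θ hr hθ h_r h_θ hhr hhθ hr0 hrL hθ0 hθL a b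
    ha hb ν₁ ν₂ κ hν₁ hν₂ hκ n₁m n₂m mm hn₁m hn₂m hmm aε bε haε hbε ν₁ε ν₂ε κε hν₁ε hν₂ε hκε 𝒱m h𝒱m
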